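/- arXiv:1805.08796 — 3 statements merged into one kernel-verified Lean document; each statement's English description precedes it below -/
import Mathlib

section
/- Let k ≤ n and let ḡ ∈ GL_k(𝔽_q) satisfy ker(ḡ − 1) ⊆ im(ḡ − 1) (equivalently, every Jordan block of ḡ with eigenvalue 1 has size at least 2). Let g = ḡ ⊕ I_{n−k} ∈ GL_n(𝔽_q). Then the cardinality of the centralizer of g in GL_n(𝔽_q) equals the product of the following four numbers: the number of A ∈ GL_k(𝔽_q) with Aḡ = ḡA; the order of GL_{n−k}(𝔽_q); the number of k×(n−k) matrices B over 𝔽_q with ḡB = B; and the number of (n−k)×k matrices C over 𝔽_q with Cḡ = C. -/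
/-!
Write a matrix commuting with `ḡ ⊕ 1` in block form `[[A, B], [C, D]]`: the commutation
amounts to `Aḡ = ḡA`, `ḡB = B`, `Cḡ = C`, with `D` free, so only invertibility has to be
understood. If `ker(ḡ - 1) ⊆ im(ḡ - 1)`, then `C X B = 0` for every `X` commuting with `ḡ`,
since the columns of `X B` lie in `ker(ḡ - 1) ⊆ im(ḡ - 1)` and `C` kills `im(ḡ - 1)`.
Hence, when `A` is invertible, the Schur complement `D - C A⁻¹ B` is just `D`. Conversely, the
inverse of an invertible such block matrix has the same shape `[[A', B'], [C', D']]`, and the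
diagonal blocks of `M M⁻¹ = 1` read `A A' = 1 - B C'` with `(B C')² = 0` and `D D' = 1`.
So the block matrix is invertible exactly when `A` and `D` are.
-/

open Matrix

variable {F : Type*} [Field F] [Fintype F] [DecidableEq F]

/-- The `(k+m) × (k+m)` block matrix `[[A, B], [C, D]]`. -/
def blockMat {k m : ℕ} (A : Matrix (Fin k) (Fin k) F) (B : Matrix (Fin k) (Fin m) F)
    (C : Matrix (Fin m) (Fin k) F) (D : Matrix (Fin m) (Fin m) F) :
    Matrix (Fin (k + m)) (Fin (k + m)) F :=
  Matrix.reindex finSumFinEquiv finSumFinEquiv (Matrix.fromBlocks A B C D)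

namespace Matrix

variable {n p R : Type*} [Fintype n] [Fintype p] [DecidableEq p]

theorem commute_fromBlocks_one_iff [Semiring R] {g A : Matrix n n R} {B : Matrix n p R}
    {C : Matrix p n R} {D : Matrix p p R} :
    Commute (fromBlocks A B C D) (fromBlocks g 0 0 1) ↔ Commute A g ∧ g * B = B ∧ C * g = C := by
  simp only [Commute, SemiconjBy, fromBlocks_multiply, Matrix.mul_zero, Matrix.zero_mul,
    Matrix.mul_one, Matrix.one_mul, add_zero, zero_add, fromBlocks_inj, and_true, eq_comm (a := B)]

theorem card_setOf_commute_reindex [Semiring R] {m : Type*} [Fintype m] [DecidableEq m]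
    [DecidableEq n] (e : m ≃ n) (G : Matrix m m R) :
    Nat.card {M : GL n R | Commute (M : Matrix n n R) (reindex e e G)} =
      Nat.card {M : GL m R | Commute (M : Matrix m m R) G} := by
  let φ := (reindexRingEquiv R e).symm
  refine Nat.card_congr (Equiv.subtypeEquiv (Units.mapEquiv φ.toMulEquiv).toEquiv fun M => ?_)
  show Commute _ _ ↔ Commute _ _
  rw [← commute_map_iff φ.injective]
  simp [φ]

variable [CommRing R] [DecidableEq n] {g : Matrix n n R}

theorem mul_mul_eq_zero_of_ker_le_range
    (hg : LinearMap.ker (toLin' (g - 1)) ≤ LinearMap.range (toLin' (g - 1)))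
    {B : Matrix n p R} (hB : g * B = B) {C : Matrix p n R} (hC : C * g = C)
    {X : Matrix n n R} (hX : Commute X g) : C * X * B = 0 := by
  refine ext_of_mulVec_single fun i => ?_
  have hXB : (g - 1) * (X * B) = 0 := by
    rw [← Matrix.mul_assoc, ← (hX.sub_right (Commute.one_right X)).eq, Matrix.mul_assoc,
      Matrix.sub_mul, hB, Matrix.one_mul, sub_self, Matrix.mul_zero]
  obtain ⟨z, hz⟩ : (X * B) *ᵥ Pi.single i 1 ∈ LinearMap.range (toLin' (g - 1)) :=
    hg (by rw [LinearMap.mem_ker, toLin'_apply, mulVec_mulVec, hXB, zero_mulVec])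
  calc (C * X * B) *ᵥ Pi.single i 1 = C *ᵥ ((g - 1) *ᵥ z) := by
        rw [Matrix.mul_assoc, ← mulVec_mulVec, ← hz, toLin'_apply]
    _ = 0 *ᵥ Pi.single i 1 := by
        rw [mulVec_mulVec, Matrix.mul_sub, hC, Matrix.mul_one, sub_self, zero_mulVec, zero_mulVec]

theorem isUnit_fromBlocks_iff_of_commute
    (hg : LinearMap.ker (toLin' (g - 1)) ≤ LinearMap.range (toLin' (g - 1)))
    {A : Matrix n n R} {B : Matrix n p R} {C : Matrix p n R} {D : Matrix p p R}
    (hM : Commute (fromBlocks A B C D) (fromBlocks g 0 0 1)) :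
    IsUnit (fromBlocks A B C D) ↔ IsUnit A ∧ IsUnit D := by
  obtain ⟨hA, hB, hC⟩ := commute_fromBlocks_one_iff.1 hM
  constructor
  · intro hunit
    set u := hunit.unit
    obtain ⟨A', B', C', D', hinv⟩ :
        ∃ A' B' C' D', fromBlocks A' B' C' D' = (↑u⁻¹ : Matrix (n ⊕ p) (n ⊕ p) R) :=
      ⟨_, _, _, _, fromBlocks_toBlocks _⟩
    obtain ⟨-, hB', hC'⟩ := commute_fromBlocks_one_iff.1 (hinv ▸ hM.units_inv_left (u := u))
    have hmul : fromBlocks A B C D * fromBlocks A' B' C' D' = 1 := by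
      rw [hinv]; exact u.mul_inv
    rw [fromBlocks_multiply, ← fromBlocks_one, fromBlocks_inj] at hmul
    obtain ⟨h₁₁, -, -, h₂₂⟩ := hmul
    have hCB' : C * B' = 0 := by
      simpa using mul_mul_eq_zero_of_ker_le_range hg hB' hC (Commute.one_left g)
    have hC'B : C' * B = 0 := by
      simpa using mul_mul_eq_zero_of_ker_le_range hg hB hC' (Commute.one_left g)
    have hnil : IsNilpotent (B * C') := ⟨2, by
      rw [pow_two, Matrix.mul_assoc, ← Matrix.mul_assoc C', hC'B, Matrix.zero_mul, Matrix.mul_zero]⟩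
    have hAA' : IsUnit (A * A') := eq_sub_of_add_eq h₁₁ ▸ hnil.isUnit_one_sub
    exact ⟨isUnit_of_mul_isUnit_left hAA', .of_mul_eq_one D' (by rwa [hCB', zero_add] at h₂₂)⟩
  · rintro ⟨hAunit, hD⟩
    let := hAunit.invertible
    rw [isUnit_fromBlocks_iff_of_invertible₁₁,
      mul_mul_eq_zero_of_ker_le_range hg hB hC (Commute.invOf_left hA), sub_zero]
    exact hD

noncomputable def centralizerFromBlocksEquiv
    (hg : LinearMap.ker (toLin' (g - 1)) ≤ LinearMap.range (toLin' (g - 1))) :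
    {M : GL (n ⊕ p) R | Commute (M : Matrix (n ⊕ p) (n ⊕ p) R) (fromBlocks g 0 0 1)} ≃
      {A : GL n R | Commute (A : Matrix n n R) g} × GL p R × {B : Matrix n p R | g * B = B} ×
        {C : Matrix p n R | C * g = C} where
  toFun M :=
    let N : Matrix (n ⊕ p) (n ⊕ p) R := M.1
    have hN : Commute (fromBlocks N.toBlocks₁₁ N.toBlocks₁₂ N.toBlocks₂₁ N.toBlocks₂₂)
        (fromBlocks g 0 0 1) := by rw [fromBlocks_toBlocks]; exact M.2
    have hblocks := commute_fromBlocks_one_iff.1 hN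
    have hunit := (isUnit_fromBlocks_iff_of_commute hg hN).1 <| by
      rw [fromBlocks_toBlocks]; exact M.1.isUnit
    (⟨hunit.1.unit, hblocks.1⟩, hunit.2.unit, ⟨_, hblocks.2.1⟩, ⟨_, hblocks.2.2⟩)
  invFun x :=
    have hM : Commute
        (fromBlocks (x.1.1 : Matrix n n R) x.2.2.1.1 x.2.2.2.1 (x.2.1 : Matrix p p R))
        (fromBlocks g 0 0 1) :=
      commute_fromBlocks_one_iff.2 ⟨x.1.2, x.2.2.1.2, x.2.2.2.2⟩
    ⟨((isUnit_fromBlocks_iff_of_commute hg hM).2 ⟨x.1.1.isUnit, x.2.1.isUnit⟩).unit, hM⟩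
  left_inv M := Subtype.ext <| Units.ext <| fromBlocks_toBlocks _
  right_inv x := by
    ext <;> simp

theorem card_centralizer_fromBlocks
    (hg : LinearMap.ker (toLin' (g - 1)) ≤ LinearMap.range (toLin' (g - 1))) :
    Nat.card {M : GL (n ⊕ p) R | Commute (M : Matrix (n ⊕ p) (n ⊕ p) R) (fromBlocks g 0 0 1)} =
      Nat.card {A : GL n R | Commute (A : Matrix n n R) g} * Nat.card (GL p R) *
        Nat.card {B : Matrix n p R | g * B = B} * Nat.card {C : Matrix p n R | C * g = C} := by
  simp only [Nat.card_congr (centralizerFromBlocksEquiv hg), Nat.card_prod, mul_assoc]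

end Matrix

/-- Let `ḡ ∈ GL_k(𝔽_q)` with `ker(ḡ - 1) ⊆ im(ḡ - 1)`, and `g = ḡ ⊕ I_{n-k}`.
The cardinality of the centralizer of `g` in `GL_n(𝔽_q)` is the product of the
number of `A ∈ GL_k` commuting with `ḡ`, the order of `GL_{n-k}`, the number of
`k × (n-k)` matrices `B` with `ḡB = B`, and the number of `(n-k) × k` matrices
`C` with `Cḡ = C`. -/
theorem centralizer_card {k m : ℕ} (g0 : GL (Fin k) F)
    (hg : LinearMap.ker (Matrix.toLin' ((g0 : Matrix (Fin k) (Fin k) F) - 1)) ≤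
      LinearMap.range (Matrix.toLin' ((g0 : Matrix (Fin k) (Fin k) F) - 1))) :
    Nat.card {M : GL (Fin (k + m)) F |
        (M : Matrix (Fin (k + m)) (Fin (k + m)) F) *
            blockMat (g0 : Matrix (Fin k) (Fin k) F) 0 0 1 =
          blockMat (g0 : Matrix (Fin k) (Fin k) F) 0 0 1 *
            (M : Matrix (Fin (k + m)) (Fin (k + m)) F)} =
      Nat.card {A : GL (Fin k) F |
          (A : Matrix (Fin k) (Fin k) F) * (g0 : Matrix (Fin k) (Fin k) F) =
            (g0 : Matrix (Fin k) (Fin k) F) * (A : Matrix (Fin k) (Fin k) F)} *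
        Nat.card (GL (Fin m) F) *
        Nat.card {B : Matrix (Fin k) (Fin m) F |
          (g0 : Matrix (Fin k) (Fin k) F) * B = B} *
        Nat.card {C : Matrix (Fin m) (Fin k) F |
          C * (g0 : Matrix (Fin k) (Fin k) F) = C} :=
  (card_setOf_commute_reindex finSumFinEquiv _).trans (card_centralizer_fromBlocks hg)
end

section
/- Let g, h ∈ GL_n(𝔽_q) satisfy ℓ(gh) = ℓ(g) + ℓ(h). Set k = 2·rank(gh − 1) − rank((gh − 1)²). Then k ≤ n and there exist z ∈ GL_n(𝔽_q) and ḡ, h̄ ∈ GL_k(𝔽_q) such that z g z⁻¹ = ḡ ⊕ I_{n−k} and z h z⁻¹ = h̄ ⊕ I_{n−k} (and consequently z (gh) z⁻¹ = (ḡ h̄) ⊕ I_{n−k}). -/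
open Matrix

variable {F : Type*} [Field F] [Fintype F] [DecidableEq F]

/-- An element of `GL n F` is a reflection if its fixed point subspace has
codimension one, i.e. `s - 1` has rank one. -/
def IsReflection {n : ℕ} (s : GL (Fin n) F) : Prop :=
  ((s : Matrix (Fin n) (Fin n) F) - 1).rank = 1

/-- The reflection length of `g`: the least `k` such that `g` is a product of
`k` reflections. -/
noncomputable def reflLength {n : ℕ} (g : GL (Fin n) F) : ℕ :=
  sInf {k | ∃ l : List (GL (Fin n) F),
    l.length = k ∧ (∀ s ∈ l, IsReflection s) ∧ l.prod = g}

/-- The embedding of a `k × k` matrix `A` as `A ⊕ I_{n-k}` in `n × n` matrices. -/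
def pad {k n : ℕ} (h : k ≤ n) (A : Matrix (Fin k) (Fin k) F) :
    Matrix (Fin n) (Fin n) F :=
  Matrix.reindex (finSumFinEquiv.trans (finCongr (Nat.add_sub_cancel' h)))
    (finSumFinEquiv.trans (finCongr (Nat.add_sub_cancel' h)))
    (Matrix.fromBlocks A 0 0 (1 : Matrix (Fin (n - k)) (Fin (n - k)) F))

/-!
Since `x y - 1 = (x - 1) y + (y - 1)`, `rank (· - 1)` is subadditive, so a product `x` of `l`
reflections has `rank (x - 1) ≤ l`.
Conversely, for `x ≠ 1` pick a row `w` of `x - 1` and a vector `v` with `w ⬝ᵥ v = 1` and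
`w ⬝ᵥ x v ≠ 0`; then `s = 1 + ((x - 1) v) wᵀ` is a reflection with `s v = x v` that fixes the
fixed space of `x`, so `s⁻¹ x` fixes strictly more. Hence `ℓ(x) = rank (x - 1)`.

For `M = gh - 1` we have `range M ≤ range (g - 1) ⊔ range (h - 1)` and
`ker (g - 1) ⊓ ker (h - 1) ≤ ker M`, so `ℓ(gh) = ℓ(g) + ℓ(h)` forces equality in both.
Take a complement `W` of `range M ⊓ ker M` in `ker M` and a complement `U ⊇ range M` of `W`:
`g` and `h` preserve `U` and fix `W` pointwise, and
`dim U = rank M + dim (range M ⊓ ker M) = 2 rank M - rank M²`.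
A basis adapted to `U ⊕ W` puts `g` and `h` in block form simultaneously.
-/

open Module LinearMap

theorem LinearMap.exists_apply_ne_zero_and_apply_ne_zero {R M N P : Type*} [Semiring R]
    [AddCommMonoid M] [AddCommMonoid N] [AddCommMonoid P] [Module R M] [Module R N] [Module R P]
    {f : M →ₗ[R] N} {g : M →ₗ[R] P} (hf : f ≠ 0) (hg : g ≠ 0) : ∃ v, f v ≠ 0 ∧ g v ≠ 0 := by
  obtain ⟨a, ha⟩ := DFunLike.ne_iff.1 hf
  obtain ⟨b, hb⟩ := DFunLike.ne_iff.1 hg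
  by_cases hga : g a = 0
  · by_cases hfb : f b = 0
    · exact ⟨a + b, by simpa [hfb] using ha, by simpa [hga] using hb⟩
    · exact ⟨b, hfb, hb⟩
  · exact ⟨a, ha, hga⟩

section
variable {K : Type*} [Field K] {ι : Type*} [Fintype ι]

theorem Matrix.rank_add_le {m : Type*} (A B : Matrix m ι K) : (A + B).rank ≤ A.rank + B.rank :=
  calc (A + B).rank ≤ finrank K ↥(range A.mulVecLin ⊔ range B.mulVecLin) := by
        rw [Matrix.rank, mulVecLin_add]; exact Submodule.finrank_mono (range_add_le _ _)
    _ ≤ A.rank + B.rank := Submodule.finrank_add_le_finrank_add_finrank _ _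

theorem Matrix.rank_mul_sub_one_le [DecidableEq ι] (x y : Matrix ι ι K) :
    (x * y - 1).rank ≤ (x - 1).rank + (y - 1).rank :=
  calc (x * y - 1).rank = ((x - 1) * y + (y - 1)).rank := by congr 1; noncomm_ring
    _ ≤ ((x - 1) * y).rank + (y - 1).rank := rank_add_le _ _
    _ ≤ (x - 1).rank + (y - 1).rank := by gcongr; exact rank_mul_le_left _ _

theorem Matrix.rank_eq_zero_iff [DecidableEq ι] {m : Type*} {A : Matrix m ι K} :
    A.rank = 0 ↔ A = 0 := by
  rw [Matrix.rank, Submodule.finrank_eq_zero, range_eq_bot, ← toLin'_apply',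
    map_eq_zero_iff _ toLin'.injective]

theorem Matrix.rank_lt_rank_of_ker_lt [DecidableEq ι] {A B : Matrix ι ι K}
    (h : ker A.mulVecLin < ker B.mulVecLin) : B.rank < A.rank := by
  have hA := finrank_range_add_finrank_ker A.mulVecLin
  have hB := finrank_range_add_finrank_ker B.mulVecLin
  have := Submodule.finrank_lt_finrank_of_lt h
  rw [Matrix.rank, Matrix.rank]
  omega

theorem Matrix.rank_vecMulVec_eq_one {c w : ι → K} (hc : c ≠ 0) (hw : w ≠ 0) :
    (vecMulVec c w).rank = 1 := by
  classical
  refine le_antisymm (rank_vecMulVec_le c w) (Nat.one_le_iff_ne_zero.2 fun h => ?_)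
  obtain ⟨i, hi⟩ := Function.ne_iff.1 hc
  obtain ⟨j, hj⟩ := Function.ne_iff.1 hw
  have := congrFun₂ (Matrix.rank_eq_zero_iff.1 h) i j
  simp_all [vecMulVec_apply]

theorem Matrix.GeneralLinearGroup.inv_mul_sub_one_mulVec_eq_zero_iff [DecidableEq ι] {a b : GL ι K}
    {y : ι → K} : (((a⁻¹ * b : GL ι K) : Matrix ι ι K) - 1) *ᵥ y = 0 ↔
      (b : Matrix ι ι K) *ᵥ y = (a : Matrix ι ι K) *ᵥ y := by
  rw [Units.val_mul, sub_mulVec, one_mulVec, sub_eq_zero, ← mulVec_mulVec]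
  constructor <;> intro h
  · conv_rhs => rw [← h]
    rw [mulVec_mulVec, Units.mul_inv, one_mulVec]
  · rw [h, mulVec_mulVec, Units.inv_mul, one_mulVec]

end

section
variable {K : Type*} [Field K] {n : ℕ}

theorem isReflection_mkOfDetNeZero_one_add_vecMulVec {c w : Fin n → K} (hc : c ≠ 0) (hw : w ≠ 0)
    (hdet : (1 + vecMulVec c w).det ≠ 0) :
    IsReflection (GeneralLinearGroup.mkOfDetNeZero _ hdet) := by
  simpa [IsReflection] using Matrix.rank_vecMulVec_eq_one hc hw

theorem exists_dotProduct_eq_one_and_dotProduct_mulVec_ne_zero {x : GL (Fin n) K} (hx : x ≠ 1) :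
    ∃ w v : Fin n → K, (∀ y, ((x : Matrix (Fin n) (Fin n) K) - 1) *ᵥ y = 0 → w ⬝ᵥ y = 0) ∧
      w ⬝ᵥ v = 1 ∧ w ⬝ᵥ ((x : Matrix (Fin n) (Fin n) K) *ᵥ v) ≠ 0 := by
  set A := (x : Matrix (Fin n) (Fin n) K) - 1
  obtain ⟨i, j, hij⟩ : ∃ i j, A i j ≠ 0 := by
    by_contra! h
    exact hx (Units.ext (sub_eq_zero.1 (Matrix.ext h)))
  -- `φ y = A i ⬝ᵥ y` is the `i`-th entry of `A *ᵥ y`, so `φ` vanishes on the fixed space of `x`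
  set φ : (Fin n → K) →ₗ[K] K := proj i ∘ₗ A.mulVecLin
  have hφ : φ ≠ 0 := DFunLike.ne_iff.2 ⟨Pi.single j 1, by simpa [φ] using hij⟩
  have hφx : φ ∘ₗ (x : Matrix (Fin n) (Fin n) K).mulVecLin ≠ 0 := by
    intro h
    refine hφ (LinearMap.ext fun y => ?_)
    have := LinearMap.congr_fun h (((x⁻¹ : GL (Fin n) K) : Matrix (Fin n) (Fin n) K) *ᵥ y)
    rwa [LinearMap.comp_apply, mulVecLin_apply, mulVec_mulVec, Units.mul_inv, one_mulVec] at this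
  obtain ⟨v, hv, hxv⟩ := exists_apply_ne_zero_and_apply_ne_zero hφ hφx
  refine ⟨A i, (φ v)⁻¹ • v, fun y hy => congrFun hy i, ?_, ?_⟩
  · change φ ((φ v)⁻¹ • v) = 1
    rw [map_smul, smul_eq_mul, inv_mul_cancel₀ hv]
  · change φ (_ *ᵥ ((φ v)⁻¹ • v)) ≠ 0
    rw [mulVec_smul, map_smul, smul_eq_mul]
    exact mul_ne_zero (inv_ne_zero hv) hxv

theorem exists_isReflection_ker_lt_ker_inv_mul_sub_one {x : GL (Fin n) K} {w v : Fin n → K}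
    (hw : ∀ y, ((x : Matrix (Fin n) (Fin n) K) - 1) *ᵥ y = 0 → w ⬝ᵥ y = 0) (hwv : w ⬝ᵥ v = 1)
    (hwxv : w ⬝ᵥ ((x : Matrix (Fin n) (Fin n) K) *ᵥ v) ≠ 0) :
    ∃ s : GL (Fin n) K, IsReflection s ∧ ker ((x : Matrix (Fin n) (Fin n) K) - 1).mulVecLin <
      ker (((s⁻¹ * x : GL (Fin n) K) : Matrix (Fin n) (Fin n) K) - 1).mulVecLin := by
  set c := ((x : Matrix (Fin n) (Fin n) K) - 1) *ᵥ v with hc_def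
  have hc : c ≠ 0 := fun h => by simp [hw v h] at hwv
  have hS : ∀ y, (1 + vecMulVec c w) *ᵥ y = y + (w ⬝ᵥ y) • c := fun y => by
    rw [add_mulVec, one_mulVec, vecMulVec_mulVec, op_smul_eq_smul]
  -- the matrix determinant lemma: `det (1 + c wᵀ) = 1 + w ⬝ᵥ c = w ⬝ᵥ x v`
  have hdet : (1 + vecMulVec c w).det ≠ 0 := by
    rwa [vecMulVec_eq Unit, det_one_add_replicateCol_mul_replicateRow, hc_def, sub_mulVec,
      one_mulVec, dotProduct_sub, hwv, add_sub_cancel]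
  refine ⟨GeneralLinearGroup.mkOfDetNeZero _ hdet,
    isReflection_mkOfDetNeZero_one_add_vecMulVec hc (fun h => by simp [h] at hwv) hdet, ?_⟩
  simp only [SetLike.lt_iff_le_and_exists, SetLike.le_def, mem_ker, mulVecLin_apply,
    GeneralLinearGroup.inv_mul_sub_one_mulVec_eq_zero_iff, GeneralLinearGroup.val_mkOfDetNeZero]
  refine ⟨fun y hy => ?_, v, ?_, hc⟩
  · rw [hS, hw y hy, zero_smul, add_zero, ← sub_eq_zero, ← hy, sub_mulVec, one_mulVec]
  · rw [hS, hwv, one_smul, hc_def, sub_mulVec, one_mulVec, add_sub_cancel]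

theorem rank_list_prod_sub_one_le {l : List (GL (Fin n) K)} (hl : ∀ s ∈ l, IsReflection s) :
    (((l.prod : GL (Fin n) K) : Matrix (Fin n) (Fin n) K) - 1).rank ≤ l.length := by
  induction l with
  | nil => simp
  | cons s l ih =>
    rw [List.prod_cons, Units.val_mul, List.length_cons, add_comm]
    exact (Matrix.rank_mul_sub_one_le _ _).trans
      (add_le_add (hl s (by simp)).le (ih fun t ht => hl t (by simp [ht])))

theorem exists_list_isReflection_prod_eq (x : GL (Fin n) K) :
    ∃ l : List (GL (Fin n) K), l.length ≤ ((x : Matrix (Fin n) (Fin n) K) - 1).rank ∧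
      (∀ s ∈ l, IsReflection s) ∧ l.prod = x := by
  induction hr : ((x : Matrix (Fin n) (Fin n) K) - 1).rank using Nat.strong_induction_on
    generalizing x with
  | _ r ih =>
    by_cases hx : x = 1
    · exact ⟨[], by simp, by simp, by simp [hx]⟩
    obtain ⟨w, v, hw, hwv, hwxv⟩ := exists_dotProduct_eq_one_and_dotProduct_mulVec_ne_zero hx
    obtain ⟨s, hs, hker⟩ := exists_isReflection_ker_lt_ker_inv_mul_sub_one hw hwv hwxv
    have hlt := hr ▸ rank_lt_rank_of_ker_lt hker
    obtain ⟨l, hlen, hl, hprod⟩ := ih _ hlt (s⁻¹ * x) rfl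
    refine ⟨s :: l, by simp only [List.length_cons]; omega, ?_, by simp [hprod]⟩
    simpa [hs] using hl

theorem reflLength_eq_rank_sub_one (x : GL (Fin n) K) :
    reflLength x = ((x : Matrix (Fin n) (Fin n) K) - 1).rank := by
  obtain ⟨l, hlen, hl, hprod⟩ := exists_list_isReflection_prod_eq x
  unfold reflLength
  refine le_antisymm (le_trans (Nat.sInf_le ⟨l, rfl, hl, hprod⟩) hlen)
    (le_csInf ⟨l.length, l, rfl, hl, hprod⟩ ?_)
  rintro _ ⟨l', rfl, hl', rfl⟩
  exact rank_list_prod_sub_one_le hl'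

end

section
variable {K V : Type*} [Field K] [AddCommGroup V] [Module K V]

theorem LinearMap.finrank_range_comp_add_finrank_range_inf_ker {W X : Type*} [AddCommGroup W]
    [Module K W] [FiniteDimensional K W] [AddCommGroup X] [Module K X] (f : V →ₗ[K] W)
    (g : W →ₗ[K] X) :
    finrank K (range (g ∘ₗ f)) + finrank K ↥(range f ⊓ ker g) = finrank K (range f) := by
  rw [range_comp, ← range_domRestrict, ← Submodule.map_comap_subtype,
    Submodule.finrank_map_subtype_eq, ← ker_domRestrict]
  exact finrank_range_add_finrank_ker _

theorem Module.End.apply_mem_of_range_sub_one_le {f : Module.End K V} {U : Submodule K V}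
    (h : range (f - 1) ≤ U) {u : V} (hu : u ∈ U) :
    f u ∈ U := by
  simpa using U.add_mem hu (h (mem_range_self (f - 1) u))

theorem Module.End.apply_eq_self_of_le_ker_sub_one {f : Module.End K V} {W : Submodule K V}
    (h : W ≤ ker (f - 1)) {w : V} (hw : w ∈ W) :
    f w = w := by
  simpa [sub_eq_zero] using h hw

theorem Module.End.range_mul_sub_one_le (f g : Module.End K V) :
    range (f * g - 1) ≤ range (f - 1) ⊔ range (g - 1) := by
  rw [show f * g - 1 = (f - 1) * g + (g - 1) by noncomm_ring]
  exact (range_add_le _ _).trans (sup_le_sup_right (range_comp_le_range _ _) _)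

theorem Module.End.ker_sub_one_inf_ker_sub_one_le (f g : Module.End K V) :
    ker (f - 1) ⊓ ker (g - 1) ≤ ker (f * g - 1) := by
  intro v hv
  simp only [Submodule.mem_inf, mem_ker, LinearMap.sub_apply, Module.End.mul_apply,
    Module.End.one_apply, sub_eq_zero] at hv ⊢
  rw [hv.2, hv.1]

variable [FiniteDimensional K V]

theorem Module.End.range_ker_mul_sub_one_of_finrank_eq (f g : Module.End K V)
    (h : finrank K (range (f * g - 1)) = finrank K (range (f - 1)) + finrank K (range (g - 1))) :
    range (f * g - 1) = range (f - 1) ⊔ range (g - 1) ∧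
      ker (f * g - 1) = ker (f - 1) ⊓ ker (g - 1) := by
  have hsup := Submodule.finrank_add_le_finrank_add_finrank (range (f - 1)) (range (g - 1))
  have hker := Submodule.finrank_sup_add_finrank_inf_eq (ker (f - 1)) (ker (g - 1))
  have htop := Submodule.finrank_le (ker (f - 1) ⊔ ker (g - 1))
  have := finrank_range_add_finrank_ker (f * g - 1)
  have := finrank_range_add_finrank_ker (f - 1)
  have := finrank_range_add_finrank_ker (g - 1)
  exact ⟨Submodule.eq_of_le_of_finrank_le (range_mul_sub_one_le f g) (by omega),
    (Submodule.eq_of_le_of_finrank_le (ker_sub_one_inf_ker_sub_one_le f g) (by omega)).symm⟩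

theorem Submodule.exists_isCompl_le_ge (U W : Submodule K V) :
    ∃ U' W' : Submodule K V, IsCompl U' W' ∧ U ≤ U' ∧ W' ≤ W ∧
      finrank K U' + finrank K W = finrank K V + finrank K ↥(U ⊓ W) := by
  obtain ⟨W', hdisj, hsup⟩ :=
    IsModularLattice.exists_disjoint_and_sup_eq (inf_le_right : U ⊓ W ≤ W)
  have hW' : W' ≤ W := hsup ▸ le_sup_right
  obtain ⟨U', hUU', hcompl⟩ := Disjoint.exists_isCompl
    (disjoint_iff_inf_le.2 ((le_inf (inf_le_inf_left U hW') inf_le_right).trans hdisj.le_bot))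
  refine ⟨U', W', hcompl, hUU', hW', ?_⟩
  have := Submodule.finrank_add_eq_of_isCompl hcompl
  have := Submodule.finrank_sup_add_finrank_inf_eq (U ⊓ W) W'
  rw [hsup, hdisj.eq_bot, finrank_bot] at this
  omega

theorem Module.End.exists_isCompl_of_finrank_range_mul_sub_one_eq (f g : Module.End K V)
    (h : finrank K (range (f * g - 1)) = finrank K (range (f - 1)) + finrank K (range (g - 1))) :
    ∃ U W : Submodule K V, IsCompl U W ∧
      finrank K U = 2 * finrank K (range (f * g - 1)) - finrank K (range ((f * g - 1) ^ 2)) ∧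
      range (f - 1) ≤ U ∧ range (g - 1) ≤ U ∧ W ≤ ker (f - 1) ∧ W ≤ ker (g - 1) := by
  obtain ⟨hrange, hker⟩ := range_ker_mul_sub_one_of_finrank_eq f g h
  obtain ⟨U, W, hUW, hRU, hWK, hdim⟩ :=
    (range (f * g - 1)).exists_isCompl_le_ge (ker (f * g - 1))
  have hsq := finrank_range_comp_add_finrank_range_inf_ker (f * g - 1) (f * g - 1)
  rw [← Module.End.mul_eq_comp, ← sq] at hsq
  have := finrank_range_add_finrank_ker (f * g - 1)
  refine ⟨U, W, hUW, by omega, ?_, ?_, ?_, ?_⟩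
  · exact (le_sup_left.trans hrange.ge).trans hRU
  · exact (le_sup_right.trans hrange.ge).trans hRU
  · exact hWK.trans (hker.le.trans inf_le_left)
  · exact hWK.trans (hker.le.trans inf_le_right)

end

section
variable {R M N ι κ : Type*} [CommSemiring R] [AddCommMonoid M] [Module R M] [AddCommMonoid N]
  [Module R N] [Fintype ι] [DecidableEq ι] [Fintype κ] [DecidableEq κ]

theorem LinearMap.toMatrix_basis_map (b : Basis ι R M) (e : M ≃ₗ[R] N) (f : Module.End R N) :
    toMatrix (b.map e) (b.map e) f = toMatrix b b (e.symm.conj f) := by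
  ext i j
  simp [LinearMap.toMatrix_apply, LinearEquiv.conj_apply]

theorem LinearMap.toMatrix_basis_reindex (b : Basis ι R M) (σ : ι ≃ κ) (f : Module.End R M) :
    toMatrix (b.reindex σ) (b.reindex σ) f = reindex σ σ (toMatrix b b f) := by
  ext i j
  simp [LinearMap.toMatrix_apply]

end

section
variable {K V : Type*} [Field K] [AddCommGroup V] [Module K V] {U W : Submodule K V}

theorem Submodule.prodEquivOfIsCompl_symm_conj (hUW : IsCompl U W) {f : Module.End K V}
    (hfU : ∀ u ∈ U, f u ∈ U) (hfW : ∀ w ∈ W, f w = w) :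
    (prodEquivOfIsCompl U W hUW).symm.conj f = (f.restrict hfU).prodMap LinearMap.id := by
  refine LinearMap.ext fun ⟨u, w⟩ => ?_
  rw [LinearEquiv.conj_apply, LinearEquiv.symm_symm, LinearMap.comp_apply, LinearMap.comp_apply,
    LinearEquiv.coe_coe, LinearEquiv.coe_coe, LinearEquiv.symm_apply_eq]
  simp [hfW w w.2]

variable [FiniteDimensional K V] {k n : ℕ}

noncomputable def Submodule.finBasisOfIsCompl (hUW : IsCompl U W) (hkn : k ≤ n)
    (hU : finrank K U = k) (hW : finrank K W = n - k) : Basis (Fin n) K V :=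
  (((finBasisOfFinrankEq K U hU).prod (finBasisOfFinrankEq K W hW)).map
    (prodEquivOfIsCompl U W hUW)).reindex
      (finSumFinEquiv.trans (finCongr (Nat.add_sub_cancel' hkn)))

theorem Submodule.toMatrix_finBasisOfIsCompl (hUW : IsCompl U W) (hkn : k ≤ n)
    (hU : finrank K U = k) (hW : finrank K W = n - k) {f : Module.End K V}
    (hfU : ∀ u ∈ U, f u ∈ U) (hfW : ∀ w ∈ W, f w = w) :
    toMatrix (finBasisOfIsCompl hUW hkn hU hW) (finBasisOfIsCompl hUW hkn hU hW) f =
      pad hkn (toMatrix (finBasisOfFinrankEq K U hU) (finBasisOfFinrankEq K U hU)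
        (f.restrict hfU)) := by
  rw [finBasisOfIsCompl, toMatrix_basis_reindex, toMatrix_basis_map,
    prodEquivOfIsCompl_symm_conj hUW hfU hfW, toMatrix_prodMap, toMatrix_id]
  rfl

end

theorem det_pad {K : Type*} [Field K] {k n : ℕ} (h : k ≤ n) (A : Matrix (Fin k) (Fin k) K) :
    (pad h A).det = A.det := by
  rw [pad, det_reindex_self, det_fromBlocks_zero₂₁, det_one, mul_one]

section
variable {K : Type*} [Field K] {ι : Type*} [Fintype ι] [DecidableEq ι]

theorem Module.Basis.toMatrix_mul_mul_toMatrix (b : Basis ι K (ι → K)) (A : Matrix ι ι K) :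
    b.toMatrix (Pi.basisFun K ι) * A * (Pi.basisFun K ι).toMatrix b =
      LinearMap.toMatrix b b (toLinAlgEquiv' A) := by
  rw [← basis_toMatrix_mul_linearMap_toMatrix_mul_basis_toMatrix b (Pi.basisFun K ι) b
    (Pi.basisFun K ι), LinearMap.toMatrix_eq_toMatrix']
  exact congrArg (_ * · * _) (LinearMap.toMatrix'_toLin' A).symm

theorem Module.Basis.exists_forall_conj_eq_toMatrix (b : Basis ι K (ι → K)) :
    ∃ z : GL ι K, ∀ x : GL ι K,
      ((z * x * z⁻¹ : GL ι K) : Matrix ι ι K) =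
        LinearMap.toMatrix b b (toLinAlgEquiv' (x : Matrix ι ι K)) :=
  ⟨⟨_, _, b.toMatrix_mul_toMatrix_flip _, (Pi.basisFun K ι).toMatrix_mul_toMatrix_flip b⟩,
    fun x => b.toMatrix_mul_mul_toMatrix x⟩

end

theorem exists_forall_conj_eq_pad {K : Type*} [Field K] {n k : ℕ} (hkn : k ≤ n)
    {U W : Submodule K (Fin n → K)} (hUW : IsCompl U W) (hU : finrank K U = k) :
    ∃ z : GL (Fin n) K, ∀ x : GL (Fin n) K,
      range (toLinAlgEquiv' (x : Matrix (Fin n) (Fin n) K) - 1) ≤ U →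
      W ≤ ker (toLinAlgEquiv' (x : Matrix (Fin n) (Fin n) K) - 1) →
      ∃ x₁ : GL (Fin k) K, ((z * x * z⁻¹ : GL (Fin n) K) : Matrix (Fin n) (Fin n) K) =
        pad hkn (x₁ : Matrix (Fin k) (Fin k) K) := by
  have hW : finrank K W = n - k := by
    have := Submodule.finrank_add_eq_of_isCompl hUW
    rw [finrank_fin_fun] at this
    omega
  obtain ⟨z, hz⟩ := (Submodule.finBasisOfIsCompl hUW hkn hU hW).exists_forall_conj_eq_toMatrix
  refine ⟨z, fun x hxU hxW => ?_⟩
  have hconj := (hz x).trans (Submodule.toMatrix_finBasisOfIsCompl hUW hkn hU hW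
    (fun _ => Module.End.apply_mem_of_range_sub_one_le hxU)
    (fun _ => Module.End.apply_eq_self_of_le_ker_sub_one hxW))
  refine ⟨GeneralLinearGroup.mkOfDetNeZero _ ?_, hconj⟩
  rw [← det_pad hkn, ← hconj]
  exact (z * x * z⁻¹).det_ne_zero

/-- Normal form of triples: if `ℓ(gh) = ℓ(g) + ℓ(h)` and
`k = 2·rank(gh - 1) - rank((gh - 1)²)`, then `k ≤ n` and the pair `(g, h)` is
simultaneously conjugate to a pair `(ḡ ⊕ I_{n-k}, h̄ ⊕ I_{n-k})` with
`ḡ, h̄ ∈ GL_k(𝔽_q)`. -/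
theorem normal_form_of_triples {n k : ℕ} (g h : GL (Fin n) F)
    (hlen : reflLength (g * h) = reflLength g + reflLength h)
    (hk : k = 2 * (((g * h : GL (Fin n) F) : Matrix (Fin n) (Fin n) F) - 1).rank -
      ((((g * h : GL (Fin n) F) : Matrix (Fin n) (Fin n) F) - 1) ^ 2).rank) :
    ∃ (hkn : k ≤ n) (z : GL (Fin n) F) (g1 h1 : GL (Fin k) F),
      ((z * g * z⁻¹ : GL (Fin n) F) : Matrix (Fin n) (Fin n) F) =
        pad hkn (g1 : Matrix (Fin k) (Fin k) F) ∧
      ((z * h * z⁻¹ : GL (Fin n) F) : Matrix (Fin n) (Fin n) F) =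
        pad hkn (h1 : Matrix (Fin k) (Fin k) F) := by
  have hrank (A : Matrix (Fin n) (Fin n) F) : A.rank = finrank F (range (toLinAlgEquiv' A)) := rfl
  simp only [reflLength_eq_rank_sub_one, Units.val_mul] at hlen hk
  rw [hrank, hrank, hrank, map_sub, map_sub, map_sub, map_mul, map_one] at hlen
  rw [hrank, hrank, map_pow, map_sub, map_mul, map_one] at hk
  obtain ⟨U, W, hUW, hU, hgU, hhU, hgW, hhW⟩ :=
    Module.End.exists_isCompl_of_finrank_range_mul_sub_one_eq _ _ hlen
  have hkn : k ≤ n := hk ▸ hU ▸ (Submodule.finrank_le U).trans_eq (finrank_fin_fun F)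
  obtain ⟨z, hz⟩ := exists_forall_conj_eq_pad hkn hUW (hU.trans hk.symm)
  obtain ⟨g₁, hg₁⟩ := hz g hgU hgW
  obtain ⟨h₁, hh₁⟩ := hz h hhU hhW
  exact ⟨hkn, z, g₁, h₁, hg₁, hh₁⟩
end

section
/- Let ξ, η ∈ 𝔽_q \ {0} and ξ′ ∈ 𝔽_q \ {0, 1}. Let N be the number of ordered pairs (g, h) ∈ GL_2(𝔽_q) × GL_2(𝔽_q) with g conjugate to r(ξ), h conjugate to r(η), and g·h = [[ξ′, 1], [0, ξ′]]. Then: N = 2q if ξ = η = ξ′; N = q if ξ′² = ξη and ξ′ ∉ {ξ, η}; and N = 0 in all other cases (in particular whenever ξ′² ≠ ξη). -/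
open Matrix

variable {F : Type*} [Field F] [Fintype F] [DecidableEq F]

/-- The representative reflection of modified type `(1)_{t-ξ}`:
`diag(ξ, 1)` if `ξ ≠ 1`, and the transvection `[[1,1],[0,1]]` if `ξ = 1`. -/
def refl2 (ξ : F) : Matrix (Fin 2) (Fin 2) F :=
  if ξ = 1 then !![1, 1; 0, 1] else !![ξ, 0; 0, 1]

/-!
A non-scalar `2 × 2` matrix `g` has a cyclic vector, so it is conjugate to the companion matrix
of its characteristic polynomial. Hence `g ∼ r(ξ)` iff `tr g = ξ + 1`, `det g = ξ` and `g ≠ 1`.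

Write `J = [[ξ', 1], [0, ξ']]`. The pair `(g, h)` is determined by `g`, as `h = g⁻¹ J`, and
`det g · tr (g⁻¹ J) = ξ' tr g - g₁₀`, `det g · det (g⁻¹ J) = ξ'²`. So the pairs correspond to the
`g = [[a, b], [c, d]]` with `a + d = ξ + 1`, `ad - bc = ξ` and `c = (ξ - ξ')(ξ' - 1)`, provided
`ξ'² = ξη`. If `c ≠ 0` then `a` is free and determines `g`: `q` solutions. If `c = 0`, that is
`ξ = ξ' = η`, then `{a, d} = {ξ, 1}` and `b` is free: `2q` solutions.
-/

section Companion

variable {K : Type*} [Field K]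

def krylov (M : Matrix (Fin 2) (Fin 2) K) (v : Fin 2 → K) : Matrix (Fin 2) (Fin 2) K :=
  !![v 0, (M *ᵥ v) 0; v 1, (M *ᵥ v) 1]

lemma mul_krylov (M : Matrix (Fin 2) (Fin 2) K) (v : Fin 2 → K) :
    M * krylov M v = krylov M v * !![0, -M.det; 1, M.trace] := by
  ext i j
  fin_cases i <;> fin_cases j <;>
    simp [krylov, mul_apply, mulVec, dotProduct, det_fin_two, trace_fin_two] <;> ring

lemma exists_det_krylov_ne_zero {M : Matrix (Fin 2) (Fin 2) K}
    (hM : M ∉ Set.range (scalar (Fin 2))) : ∃ v, (krylov M v).det ≠ 0 := by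
  by_contra! h
  have h₀ : M 1 0 = 0 := by simpa [krylov, det_fin_two, mulVec, dotProduct] using h ![1, 0]
  have h₁ : M 0 1 = 0 := by simpa [krylov, det_fin_two, mulVec, dotProduct] using h ![0, 1]
  have h₂ : M 1 0 + M 1 1 - (M 0 0 + M 0 1) = 0 := by
    simpa [krylov, det_fin_two, mulVec, dotProduct] using h ![1, 1]
  have hd : M 1 1 = M 0 0 := by linear_combination h₂ - h₀ + h₁
  refine hM ⟨M 0 0, ?_⟩
  ext i j
  fin_cases i <;> fin_cases j <;> simp [h₀, h₁, hd]

lemma exists_conj_eq_companion (g : GL (Fin 2) K) (hg : g.val ∉ Set.range (scalar (Fin 2))) :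
    ∃ z : GL (Fin 2) K, (z * g * z⁻¹).val = !![0, -g.val.det; 1, g.val.trace] := by
  obtain ⟨v, hv⟩ := exists_det_krylov_ne_zero hg
  refine ⟨(GeneralLinearGroup.mkOfDetNeZero _ hv)⁻¹, ?_⟩
  rw [inv_inv, Units.val_mul, Units.val_mul, GeneralLinearGroup.val_mkOfDetNeZero,
    coe_units_inv, GeneralLinearGroup.val_mkOfDetNeZero, Matrix.mul_assoc, mul_krylov,
    ← Matrix.mul_assoc, nonsing_inv_mul _ (isUnit_iff_ne_zero.mpr hv), Matrix.one_mul]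

lemma isConj_of_trace_eq_of_det_eq {g h : GL (Fin 2) K}
    (hg : g.val ∉ Set.range (scalar (Fin 2))) (hh : h.val ∉ Set.range (scalar (Fin 2)))
    (htr : g.val.trace = h.val.trace) (hdet : g.val.det = h.val.det) : IsConj g h := by
  obtain ⟨x, hx⟩ := exists_conj_eq_companion g hg
  obtain ⟨y, hy⟩ := exists_conj_eq_companion h hh
  rw [htr, hdet, ← hy] at hx
  exact (isConj_iff.mpr ⟨x, rfl⟩).trans (isConj_iff.mpr ⟨y, (Units.ext hx).symm⟩).symm

lemma trace_conj (z g : GL (Fin 2) K) : (z * g * z⁻¹).val.trace = g.val.trace := by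
  rw [Units.val_mul, Units.val_mul, trace_units_conj]

lemma det_conj (z g : GL (Fin 2) K) : (z * g * z⁻¹).val.det = g.val.det := by
  rw [Units.val_mul, Units.val_mul, det_units_conj]

end Companion

section Reflection

variable {K : Type*} [Field K]

/-- `1` is the only double root of `(t - ξ)(t - 1)`. -/
lemma eq_one_of_mul_self_eq_of_add_self_eq {x ξ : K} (hdet : x * x = ξ) (htr : x + x = ξ + 1) :
    x = 1 :=
  sub_eq_zero.mp (sq_eq_zero_iff.mp (by linear_combination hdet - htr))

variable [DecidableEq K]

lemma trace_refl2 (ξ : K) : (refl2 ξ).trace = ξ + 1 := by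
  unfold refl2; split_ifs with h <;> simp [trace_fin_two, h]

lemma det_refl2 (ξ : K) : (refl2 ξ).det = ξ := by
  unfold refl2; split_ifs with h <;> simp [h]

lemma refl2_notMem_range_scalar (ξ : K) : refl2 ξ ∉ Set.range (scalar (Fin 2)) := by
  rintro ⟨c, hc⟩
  unfold refl2 at hc
  split_ifs at hc with h
  · simpa using congrFun (congrFun hc 0) 1
  · exact h (by simpa using (congrFun (congrFun hc 0) 0).symm.trans (congrFun (congrFun hc 1) 1))

lemma exists_conj_eq_refl2_iff {ξ : K} (g : GL (Fin 2) K) :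
    (∃ z : GL (Fin 2) K, (z * g * z⁻¹).val = refl2 ξ) ↔
      g.val.trace = ξ + 1 ∧ g.val.det = ξ ∧ g ≠ 1 := by
  constructor
  · rintro ⟨z, hz⟩
    refine ⟨by rw [← trace_conj z, hz, trace_refl2], by rw [← det_conj z, hz, det_refl2], ?_⟩
    rintro rfl
    exact refl2_notMem_range_scalar ξ ⟨1, by simp [← hz]⟩
  · rintro ⟨htr, hdet, hne⟩
    have hξ : (refl2 ξ).det ≠ 0 := by rw [det_refl2, ← hdet]; exact g.det_ne_zero
    have hg : g.val ∉ Set.range (scalar (Fin 2)) := by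
      rintro ⟨c, hc⟩
      rw [← hc] at htr hdet
      simp only [scalar_apply, trace_diagonal, det_diagonal, Fin.sum_univ_two, Fin.prod_univ_two]
        at htr hdet
      exact hne (Units.ext (by simp [← hc, eq_one_of_mul_self_eq_of_add_self_eq hdet htr]))
    obtain ⟨z, hz⟩ := isConj_iff.mp <| isConj_of_trace_eq_of_det_eq
      (h := .mkOfDetNeZero _ hξ) hg (refl2_notMem_range_scalar ξ)
      (by simp [htr, trace_refl2]) (by simp [hdet, det_refl2])
    exact ⟨z, by rw [hz, GeneralLinearGroup.val_mkOfDetNeZero]⟩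

end Reflection

section Jordan

variable {K : Type*} [Field K]

lemma det_mul_det_inv_mul (g J : GL (Fin 2) K) : g.val.det * (g⁻¹ * J).val.det = J.val.det := by
  rw [← det_mul, ← Units.val_mul, mul_inv_cancel_left]

lemma det_mul_trace_inv_mul_jordan (g : GL (Fin 2) K) (x : K) :
    g.val.det * (g⁻¹.val * !![x, 1; 0, x]).trace = x * g.val.trace - g 1 0 := by
  rw [coe_units_inv, inv_def, Ring.inverse_eq_inv', smul_mul, trace_smul, smul_eq_mul,
    ← mul_assoc, mul_inv_cancel₀ g.det_ne_zero, one_mul, eta_fin_two g.val, adjugate_fin_two_of,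
    mul_fin_two, trace_fin_two_of, trace_fin_two_of]
  simp only [of_apply, cons_val', cons_val_zero, cons_val_one, cons_val_fin_one]
  ring

variable [DecidableEq K]

lemma conj_refl2_pair_iff {ξ η ξ' : K} (hξ'1 : ξ' ≠ 1) {J : GL (Fin 2) K}
    (hJ : J.val = !![ξ', 1; 0, ξ']) (g : GL (Fin 2) K) :
    ((∃ z : GL (Fin 2) K, (z * g * z⁻¹).val = refl2 ξ) ∧
        ∃ z : GL (Fin 2) K, (z * (g⁻¹ * J) * z⁻¹).val = refl2 η) ↔
      ξ' ^ 2 = ξ * η ∧ g.val.trace = ξ + 1 ∧ g.val.det = ξ ∧ g 1 0 = (ξ - ξ') * (ξ' - 1) := by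
  have hdet := det_mul_det_inv_mul g J
  have htr := det_mul_trace_inv_mul_jordan g ξ'
  rw [hJ, det_fin_two_of] at hdet
  rw [← hJ, ← Units.val_mul] at htr
  simp only [exists_conj_eq_refl2_iff]
  constructor
  · rintro ⟨⟨htr_g, hdet_g, -⟩, htr_h, hdet_h, -⟩
    rw [hdet_g, hdet_h] at hdet
    rw [hdet_g, htr_g, htr_h] at htr
    exact ⟨by linear_combination -hdet, htr_g, hdet_g, by linear_combination htr - hdet⟩
  · rintro ⟨hsq, htr_g, hdet_g, hc⟩
    have hξ : ξ ≠ 0 := hdet_g ▸ g.det_ne_zero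
    refine ⟨⟨htr_g, hdet_g, ?_⟩, ?_, ?_, ?_⟩
    · rintro rfl
      simp only [Units.val_one, trace_one, Fintype.card_fin, Nat.cast_ofNat,
        one_apply_ne one_ne_zero] at htr_g hc
      exact hξ'1 (sub_eq_zero.mp (sq_eq_zero_iff.mp (by linear_combination hc + (1 - ξ') * htr_g)))
    · rw [hdet_g, htr_g, hc] at htr
      apply mul_left_cancel₀ hξ
      linear_combination htr + hsq
    · rw [hdet_g] at hdet
      apply mul_left_cancel₀ hξ
      linear_combination hdet + hsq
    · rw [Ne, inv_mul_eq_one]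
      rintro rfl
      rw [hJ, trace_fin_two_of] at htr_g
      rw [hJ, det_fin_two_of] at hdet_g
      exact hξ'1 (eq_one_of_mul_self_eq_of_add_self_eq (by linear_combination hdet_g) htr_g)

end Jordan

lemma card_setOf_mul_eq {G : Type*} [Group G] (P Q : G → Prop) (j : G) :
    Nat.card {p : G × G | P p.1 ∧ Q p.2 ∧ p.1 * p.2 = j} =
      Nat.card {g : G | P g ∧ Q (g⁻¹ * j)} :=
  Nat.card_congr
    { toFun := fun p => ⟨p.1.1, p.2.1, by rw [← eq_inv_mul_of_mul_eq p.2.2.2]; exact p.2.2.1⟩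
      invFun := fun g => ⟨(g.1, g.1⁻¹ * j), g.2.1, g.2.2, mul_inv_cancel_left _ _⟩
      left_inv := fun p => by ext <;> simp [← p.2.2.2]
      right_inv := fun g => rfl }

section Count

variable {K : Type*} [Field K]

def traceDetEquiv {t δ c : K} (hδ : δ ≠ 0) :
    {g : GL (Fin 2) K | g.val.trace = t ∧ g.val.det = δ ∧ g 1 0 = c} ≃
      {p : K × K | p.1 * (t - p.1) - p.2 * c = δ} where
  toFun g := ⟨(g.1 0 0, g.1 0 1), by
    obtain ⟨htr, hdet, hc⟩ := g.2
    rw [trace_fin_two] at htr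
    rw [det_fin_two] at hdet
    simp only [Set.mem_ofPred_eq, ← hc, ← hdet, ← htr]
    ring⟩
  invFun p := ⟨.mkOfDetNeZero !![p.1.1, p.1.2; c, t - p.1.1] (by
      rw [det_fin_two_of, show _ = δ from p.2]; exact hδ),
    ⟨by simp [trace_fin_two_of], by rw [GeneralLinearGroup.val_mkOfDetNeZero, det_fin_two_of]; exact p.2,
      rfl⟩⟩
  left_inv g := by
    obtain ⟨htr, -, hc⟩ := g.2
    rw [trace_fin_two] at htr
    ext i j
    fin_cases i <;> fin_cases j <;> simp [← hc, ← htr]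
  right_inv p := rfl

lemma card_trace_det_of_ne_zero {t δ c : K} (hδ : δ ≠ 0) (hc : c ≠ 0) :
    Nat.card {g : GL (Fin 2) K | g.val.trace = t ∧ g.val.det = δ ∧ g 1 0 = c} = Nat.card K := by
  refine (Nat.card_congr (traceDetEquiv hδ)).trans (Nat.card_congr ?_)
  exact
    { toFun := fun p => p.1.1
      invFun := fun a => ⟨(a, (a * (t - a) - δ) / c), by
        simp only [Set.mem_ofPred_eq, div_mul_cancel₀ _ hc]; ring⟩
      left_inv := fun p => by
        have hp : p.1.1 * (t - p.1.1) - p.1.2 * c = δ := p.2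
        ext
        · rfl
        · dsimp only
          rw [div_eq_iff hc]
          linear_combination hp
      right_inv := fun a => rfl }

lemma card_trace_det_upperTriangular {a d : K} (had : a ≠ d) (hδ : a * d ≠ 0) :
    Nat.card {g : GL (Fin 2) K | g.val.trace = a + d ∧ g.val.det = a * d ∧ g 1 0 = 0} =
      2 * Nat.card K := by
  have hsol : {p : K × K | p.1 * (a + d - p.1) - p.2 * 0 = a * d} =
      ({a, d} : Set K) ×ˢ Set.univ := by
    ext ⟨x, y⟩
    simp only [Set.mem_ofPred_eq, Set.mem_prod, Set.mem_insert_iff, Set.mem_singleton_iff,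
      Set.mem_univ, and_true, mul_zero, sub_zero]
    constructor
    · intro h
      rcases mul_eq_zero.mp (by linear_combination -h : (x - a) * (x - d) = 0) with h | h
      · exact Or.inl (sub_eq_zero.mp h)
      · exact Or.inr (sub_eq_zero.mp h)
    · rintro (rfl | rfl) <;> ring
  rw [Nat.card_congr (traceDetEquiv hδ), hsol, Nat.card_coe_set_eq, Set.ncard_prod,
    Set.ncard_pair had, Set.ncard_univ]

end Count

theorem structure_constant_two_reflections_jordan_general (q : ℕ) (hq : Fintype.card F = q)
    (ξ η ξ' : F) (hξ'0 : ξ' ≠ 0) (hξ'1 : ξ' ≠ 1) :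
    Nat.card {gh : GL (Fin 2) F × GL (Fin 2) F |
      (∃ z : GL (Fin 2) F,
        ((z * gh.1 * z⁻¹ : GL (Fin 2) F) : Matrix (Fin 2) (Fin 2) F) = refl2 ξ) ∧
      (∃ z : GL (Fin 2) F,
        ((z * gh.2 * z⁻¹ : GL (Fin 2) F) : Matrix (Fin 2) (Fin 2) F) = refl2 η) ∧
      ((gh.1 * gh.2 : GL (Fin 2) F) : Matrix (Fin 2) (Fin 2) F) = !![ξ', 1; 0, ξ']} =
    if ξ = η ∧ ξ' = ξ then 2 * q
    else if ξ' ^ 2 = ξ * η ∧ ξ' ≠ ξ ∧ ξ' ≠ η then q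
    else 0 := by
  have hJ : (!![ξ', 1; 0, ξ'] : Matrix (Fin 2) (Fin 2) F).det ≠ 0 := by
    simpa [det_fin_two_of] using hξ'0
  set J := GeneralLinearGroup.mkOfDetNeZero _ hJ
  have hmul (x : GL (Fin 2) F) : x.val = !![ξ', 1; 0, ξ'] ↔ x = J := (Units.ext_iff (v := J)).symm
  simp only [hmul]
  rw [card_setOf_mul_eq (fun g => ∃ z : GL (Fin 2) F, (z * g * z⁻¹).val = refl2 ξ)
    (fun h => ∃ z : GL (Fin 2) F, (z * h * z⁻¹).val = refl2 η)]
  simp only [conj_refl2_pair_iff hξ'1 (J := J) rfl]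
  rw [← hq, ← Nat.card_eq_fintype_card]
  by_cases hsq : ξ' ^ 2 = ξ * η
  · rcases eq_or_ne ξ' ξ with rfl | hne
    · obtain rfl : η = ξ' := mul_left_cancel₀ hξ'0 (by linear_combination -hsq)
      rw [if_pos ⟨rfl, rfl⟩]
      simp only [hsq, true_and, sub_self, zero_mul]
      simpa only [mul_one] using card_trace_det_upperTriangular hξ'1 (mul_ne_zero hξ'0 one_ne_zero)
    · have hη : ξ' ≠ η := fun h => hne (mul_right_cancel₀ hξ'0 (by linear_combination hsq - ξ * h))
      rw [if_neg (fun h => hne h.2), if_pos ⟨hsq, hne, hη⟩]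
      simp only [hsq, true_and]
      exact card_trace_det_of_ne_zero (left_ne_zero_of_mul (hsq ▸ pow_ne_zero 2 hξ'0))
        (mul_ne_zero (sub_ne_zero.2 hne.symm) (sub_ne_zero.2 hξ'1))
  · have hA : ¬(ξ = η ∧ ξ' = ξ) := fun ⟨h, h'⟩ => hsq (by rw [← h, h']; ring)
    simp [hsq, hA]

/-- The number of pairs `(g, h)` in `GL_2(𝔽_q)` with `g ∼ r(ξ)`, `h ∼ r(η)` and
`g·h = [[ξ′, 1], [0, ξ′]]` (where `ξ′ ∉ {0, 1}`): it is `2q` if `ξ = η = ξ′`;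
`q` if `ξ′² = ξη` and `ξ′ ∉ {ξ, η}`; and `0` otherwise. -/
theorem structure_constant_two_reflections_jordan (q : ℕ) (hq : Fintype.card F = q)
    (ξ η ξ' : F) (hξ : ξ ≠ 0) (hη : η ≠ 0) (hξ'0 : ξ' ≠ 0) (hξ'1 : ξ' ≠ 1) :
    Nat.card {gh : GL (Fin 2) F × GL (Fin 2) F |
      (∃ z : GL (Fin 2) F,
        ((z * gh.1 * z⁻¹ : GL (Fin 2) F) : Matrix (Fin 2) (Fin 2) F) = refl2 ξ) ∧
      (∃ z : GL (Fin 2) F,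
        ((z * gh.2 * z⁻¹ : GL (Fin 2) F) : Matrix (Fin 2) (Fin 2) F) = refl2 η) ∧
      ((gh.1 * gh.2 : GL (Fin 2) F) : Matrix (Fin 2) (Fin 2) F) = !![ξ', 1; 0, ξ']} =
    if ξ = η ∧ ξ' = ξ then 2 * q
    else if ξ' ^ 2 = ξ * η ∧ ξ' ≠ ξ ∧ ξ' ≠ η then q
    else 0 :=
  structure_constant_two_reflections_jordan_general q hq ξ η ξ' hξ'0 hξ'1
end
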